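/- arXiv:2207.03261 — 4 statements merged into one kernel-verified Lean document; each statement's English description precedes it below -/
import Mathlib

section
/- Let S be a small sifted category. Then the forgetful functor from the category of groups to the category of types preserves colimits of shape S; in particular, for any diagram G : S ⥤ Grp, the colimit of the underlying diagram of sets carries a group structure exhibiting it as the colimit of G. -/
open CategoryTheory CategoryTheory.Limits

namespace Stmt4Aux

universe u

variable {S : Type u} [SmallCategory S] [IsSifted S] (G : S ⥤ GrpCat.{u})

/-- The underlying type-valued diagram. -/
abbrev F : S ⥤ Type u := G ⋙ forget GrpCat

/-- The candidate colimit set. -/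
abbrev T : Type u := (F G).ColimitType

/-- The canonical maps into the quotient. -/
def ι (s : S) (x : G.obj s) : T G := Quot.mk _ ⟨s, x⟩

lemma ι_eq {s u : S} (f : s ⟶ u) (x : G.obj s) : ι G s x = ι G u (G.map f x) :=
  Quot.sound ⟨f, rfl⟩

instance connStr (s t : S) : IsConnected (StructuredArrow (s, t) (Functor.diag S)) :=
  (inferInstance : (Functor.diag S).Final).out (s, t)


/-- The first leg of a structured arrow into the diagonal. -/
def pr1 {s t : S} (X : StructuredArrow (s, t) (Functor.diag S)) : s ⟶ X.right := X.hom.1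

/-- The second leg of a structured arrow into the diagonal. -/
def pr2 {s t : S} (X : StructuredArrow (s, t) (Functor.diag S)) : t ⟶ X.right := X.hom.2

lemma pr1_w {s t : S} {X Y : StructuredArrow (s, t) (Functor.diag S)} (k : X ⟶ Y) :
    pr1 X ≫ k.right = pr1 Y := by
  have := congrArg Prod.fst (StructuredArrow.w k)
  exact this

lemma pr2_w {s t : S} {X Y : StructuredArrow (s, t) (Functor.diag S)} (k : X ⟶ Y) :
    pr2 X ≫ k.right = pr2 Y := by
  have := congrArg Prod.snd (StructuredArrow.w k)
  exact this

/-- Multiplication of representatives, using a choice of cospan. -/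
noncomputable def mulAux (s t : S) (x : G.obj s) (y : G.obj t) : T G :=
  let X := Nonempty.some (inferInstance :
    Nonempty (StructuredArrow (s, t) (Functor.diag S)))
  ι G X.right (G.map (pr1 X) x * G.map (pr2 X) y)

lemma mulAux_eq (s t : S) (x : G.obj s) (y : G.obj t) {u : S} (f : s ⟶ u) (g : t ⟶ u) :
    mulAux G s t x y = ι G u (G.map f x * G.map g y) := by
  let Φ : StructuredArrow (s, t) (Functor.diag S) → T G := fun X =>
    ι G X.right (G.map (pr1 X) x * G.map (pr2 X) y)
  have hΦ : ∀ (X Y : StructuredArrow (s, t) (Functor.diag S)) (k : X ⟶ Y), Φ X = Φ Y := by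
    intro X Y k
    have h1 := pr1_w k
    have h2 := pr2_w k
    have := ι_eq G k.right (G.map (pr1 X) x * G.map (pr2 X) y)
    rw [map_mul] at this
    simp only [Φ, this, ← h1, ← h2, G.map_comp, GrpCat.coe_comp, Function.comp_apply]
  have key : ∀ X Y, Φ X = Φ Y := fun X Y =>
    constant_of_preserves_morphisms Φ hΦ X Y
  have := key (Nonempty.some (inferInstance :
      Nonempty (StructuredArrow (s, t) (Functor.diag S))))
    (StructuredArrow.mk ((f, g) : (s, t) ⟶ (Functor.diag S).obj u))
  exact this

/-- Multiplication on the quotient. -/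
noncomputable def mul : T G → T G → T G :=
  Quot.lift
    (fun p => Quot.lift (fun q => mulAux G p.1 q.1 p.2 q.2)
      (by
        rintro ⟨t, y⟩ ⟨t', y'⟩ ⟨g, hg⟩
        dsimp at hg ⊢
        obtain ⟨X⟩ := (inferInstance :
          Nonempty (StructuredArrow (p.1, t') (Functor.diag S)))
        rw [mulAux_eq G p.1 t p.2 y (pr1 X) (g ≫ (pr2 X)),
          mulAux_eq G p.1 t' p.2 y' (pr1 X) (pr2 X), hg]
        simp [G.map_comp]))
    (by
      rintro ⟨s, x⟩ ⟨s', x'⟩ ⟨f, hf⟩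
      dsimp at hf ⊢
      funext b
      induction b using Quot.ind with
      | _ q =>
        obtain ⟨t, y⟩ := q
        obtain ⟨X⟩ := (inferInstance :
          Nonempty (StructuredArrow (s', t) (Functor.diag S)))
        show mulAux G s t x y = mulAux G s' t x' y
        rw [mulAux_eq G s t x y (f ≫ (pr1 X)) (pr2 X),
          mulAux_eq G s' t x' y (pr1 X) (pr2 X), hf]
        simp [G.map_comp])

/-- The base point. -/
noncomputable def one : T G := ι G (Nonempty.some (inferInstance : Nonempty S)) 1

lemma ι_one (s : S) : ι G s (1 : G.obj s) = one G := by
  obtain ⟨X⟩ := (inferInstance :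
    Nonempty (StructuredArrow (s, Nonempty.some (inferInstance : Nonempty S))
      (Functor.diag S)))
  rw [ι_eq G (pr1 X) (1 : G.obj s), map_one, one, ι_eq G (pr2 X) (1 : _), map_one]

/-- Inversion on the quotient. -/
noncomputable def inv : T G → T G :=
  Quot.lift (fun p => ι G p.1 p.2⁻¹)
    (by
      rintro ⟨s, x⟩ ⟨s', x'⟩ ⟨f, hf⟩
      dsimp at hf ⊢
      rw [ι_eq G f x⁻¹, map_inv, hf])

noncomputable instance : Mul (T G) := ⟨mul G⟩
noncomputable instance : One (T G) := ⟨one G⟩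
noncomputable instance : Inv (T G) := ⟨inv G⟩

lemma mul_def {s t : S} (x : G.obj s) (y : G.obj t) {u : S} (f : s ⟶ u) (g : t ⟶ u) :
    ι G s x * ι G t y = ι G u (G.map f x * G.map g y) :=
  mulAux_eq G s t x y f g

noncomputable instance : Group (T G) where
  mul_assoc a b c := by
    induction a using Quot.ind with
    | _ p =>
    induction b using Quot.ind with
    | _ q =>
    induction c using Quot.ind with
    | _ r =>
      obtain ⟨s, x⟩ := p; obtain ⟨t, y⟩ := q; obtain ⟨w, z⟩ := r
      obtain ⟨X⟩ := (inferInstance : Nonempty (StructuredArrow (s, t) (Functor.diag S)))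
      obtain ⟨Y⟩ := (inferInstance :
        Nonempty (StructuredArrow (X.right, w) (Functor.diag S)))
      show ι G s x * ι G t y * ι G w z = ι G s x * (ι G t y * ι G w z)
      rw [mul_def G x y (pr1 X) (pr2 X),
        mul_def G (G.map (pr1 X) x * G.map (pr2 X) y) z (pr1 Y) (pr2 Y),
        mul_def G y z ((pr2 X) ≫ (pr1 Y)) (pr2 Y),
        mul_def G x (G.map ((pr2 X) ≫ (pr1 Y)) y * G.map (pr2 Y) z)
          ((pr1 X) ≫ (pr1 Y)) (𝟙 Y.right)]
      simp [G.map_comp, mul_assoc]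
  one_mul a := by
    induction a using Quot.ind with
    | _ p =>
      obtain ⟨s, x⟩ := p
      show one G * ι G s x = ι G s x
      obtain ⟨X⟩ := (inferInstance :
        Nonempty (StructuredArrow (Nonempty.some (inferInstance : Nonempty S), s)
          (Functor.diag S)))
      rw [one, mul_def G 1 x (pr1 X) (pr2 X), map_one, one_mul, ← ι_eq]
  mul_one a := by
    induction a using Quot.ind with
    | _ p =>
      obtain ⟨s, x⟩ := p
      show ι G s x * one G = ι G s x
      obtain ⟨X⟩ := (inferInstance :
        Nonempty (StructuredArrow (s, Nonempty.some (inferInstance : Nonempty S))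
          (Functor.diag S)))
      rw [one, mul_def G x 1 (pr1 X) (pr2 X), map_one, mul_one, ← ι_eq]
  inv_mul_cancel a := by
    induction a using Quot.ind with
    | _ p =>
      obtain ⟨s, x⟩ := p
      show inv G (ι G s x) * ι G s x = one G
      have : inv G (ι G s x) = ι G s x⁻¹ := rfl
      rw [this, mul_def G x⁻¹ x (𝟙 s) (𝟙 s)]
      simp [ι_one]

/-- The canonical maps as group homomorphisms. -/
noncomputable def ιHom (s : S) : G.obj s →* T G where
  toFun := ι G s
  map_one' := ι_one G s
  map_mul' x y := by
    rw [mul_def G x y (𝟙 s) (𝟙 s)]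
    simp

/-- The colimit cocone in `Grp`. -/
noncomputable def cocone : Cocone G where
  pt := GrpCat.of (T G)
  ι :=
    { app := fun s => GrpCat.ofHom (ιHom G s)
      naturality := fun s t f => by
        ext x
        exact (ι_eq G f x).symm }

/-- The cocone is a colimit. -/
noncomputable def isColimit : IsColimit (cocone G) where
  desc c :=
    GrpCat.ofHom
      { toFun := Quot.lift (fun p => c.ι.app p.1 p.2)
          (by
            rintro ⟨s, x⟩ ⟨s', x'⟩ ⟨f, hf⟩
            dsimp at hf ⊢
            rw [hf, ← c.w f]
            rfl)
        map_one' := by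
          show c.ι.app _ (1 : G.obj _) = 1
          simp
        map_mul' := fun a b => by
          induction a using Quot.ind with
          | _ p =>
          induction b using Quot.ind with
          | _ q =>
            obtain ⟨s, x⟩ := p; obtain ⟨t, y⟩ := q
            obtain ⟨X⟩ := (inferInstance :
              Nonempty (StructuredArrow (s, t) (Functor.diag S)))
            have h : ι G s x * ι G t y =
                ι G X.right (G.map (pr1 X) x * G.map (pr2 X) y) :=
              mul_def G x y (pr1 X) (pr2 X)
            rw [show (Quot.mk ((F G).ColimitTypeRel) ⟨s, x⟩ : T G) = ι G s x from rfl,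
              show (Quot.mk ((F G).ColimitTypeRel) ⟨t, y⟩ : T G) = ι G t y from rfl, h]
            refine Eq.trans
              ((c.ι.app X.right).hom.map_mul
                (G.map (pr1 X) x) (G.map (pr2 X) y)) ?_
            have e1 : c.ι.app X.right (G.map (pr1 X) x) = c.ι.app s x := by
              rw [← c.w (pr1 X)]; rfl
            have e2 : c.ι.app X.right (G.map (pr2 X) y) = c.ι.app t y := by
              rw [← c.w (pr2 X)]; rfl
            show c.ι.app X.right (G.map (pr1 X) x) * c.ι.app X.right (G.map (pr2 X) y) =
              _ * _
            rw [e1, e2]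
            rfl }
  fac c s := by ext x; rfl
  uniq c m hm := by
    ext a
    induction a using Quot.ind with
    | _ p =>
      obtain ⟨s, x⟩ := p
      exact congrFun (congrArg (fun (h : G.obj s ⟶ c.pt) => (h : G.obj s → c.pt))
        (hm s)) x

/-- The mapped cocone is a colimit of types. -/
noncomputable def mappedIsColimit : IsColimit ((forget GrpCat).mapCocone (cocone G)) :=
  (Types.TypeMax.colimitCoconeIsColimit.{u, u} (F G)).ofIsoColimit
    (Cocones.ext (Iso.refl _) (fun s => rfl))

end Stmt4Aux

theorem stmt_4 (S : Type u) [SmallCategory S] [IsSifted S] :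
    PreservesColimitsOfShape S (forget GrpCat.{u}) ∧
    ∀ (G : S ⥤ GrpCat.{u}) (c : Cocone G), IsColimit c →
      Nonempty (IsColimit ((forget GrpCat.{u}).mapCocone c)) := by
  have h : PreservesColimitsOfShape S (forget GrpCat.{u}) := by
    constructor
    intro G
    exact preservesColimit_of_preserves_colimit_cocone (Stmt4Aux.isColimit G)
      (Stmt4Aux.mappedIsColimit G)
  exact ⟨h, fun G c hc => ⟨isColimitOfPreserves (forget GrpCat) hc⟩⟩
end

section
/- Let F be a small filtered category, D a finitely generated category, and D' : F × D ⥤ Type a functor. Then the canonical map colim_{f : F} lim_{d : D} D'(f, d) ⟶ lim_{d : D} colim_{f : F} D'(f, d) is a bijection. In particular, filtered colimits of types commute with finitely generated limits. -/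
open CategoryTheory CategoryTheory.Limits

/-- A category `D` is finitely generated if its type of objects is finite and there is a
finite family of morphisms `Φ i : s i ⟶ t i` generating all morphisms under composition. -/
def FinitelyGeneratedCategory (D : Type*) [Category D] : Prop :=
  Finite D ∧
    ∃ (I : Type) (_ : Finite I) (s t : I → D) (Φ : ∀ i : I, s i ⟶ t i),
      ∀ (P : ∀ ⦃a b : D⦄, (a ⟶ b) → Prop),
        (∀ a : D, P (𝟙 a)) →
        (∀ i : I, P (Φ i)) →
        (∀ ⦃a b c : D⦄ (f : a ⟶ b) (g : b ⟶ c), P f → P g → P (f ≫ g)) →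
        ∀ ⦃a b : D⦄ (f : a ⟶ b), P f

open CategoryTheory.Limits.Types CategoryTheory.Limits.Types.FilteredColimit
open CategoryTheory.Prod

theorem aux_surjective {J K : Type u} [SmallCategory J] [SmallCategory K]
    [IsFiltered K] [Finite J]
    {I : Type} [Finite I] {s t : I → J} (Φ : ∀ i : I, s i ⟶ t i)
    (hgen : ∀ (P : ∀ ⦃a b : J⦄, (a ⟶ b) → Prop),
        (∀ a : J, P (𝟙 a)) → (∀ i : I, P (Φ i)) →
        (∀ ⦃a b c : J⦄ (f : a ⟶ b) (g : b ⟶ c), P f → P g → P (f ≫ g)) →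
        ∀ ⦃a b : J⦄ (f : a ⟶ b), P f)
    (F : J × K ⥤ Type u) :
    Function.Surjective (colimitLimitToLimitColimit F) := by
  classical
  cases nonempty_fintype J
  cases nonempty_fintype I
  intro x
  have z := fun j => jointly_surjective' (limit.π (Functor.curry.obj F ⋙ Limits.colim) j x)
  let k : J → K := fun j => (z j).choose
  let y : ∀ j, F.obj (j, k j) := fun j => (z j).choose_spec.choose
  have e : ∀ j,
      colimit.ι ((Functor.curry.obj F).obj j) (k j) (y j) = limit.π (Functor.curry.obj F ⋙ Limits.colim) j x :=
    fun j => (z j).choose_spec.choose_spec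
  clear_value k y
  clear z
  let k' : K := IsFiltered.sup (Finset.univ.image k) ∅
  have g : ∀ j, k j ⟶ k' := fun j => IsFiltered.toSup (Finset.univ.image k) ∅ (by simp)
  clear_value k'
  have w : ∀ i : I,
      colimit.ι ((Functor.curry.obj F).obj (t i)) k'
          (F.map ((𝟙 (t i), g (t i)) : (t i, k (t i)) ⟶ (t i, k')) (y (t i))) =
        colimit.ι ((Functor.curry.obj F).obj (t i)) k'
          (F.map ((Φ i, g (s i)) : (s i, k (s i)) ⟶ (t i, k')) (y (s i))) := by
    intro i
    have tt : ((Φ i, g (s i)) : (s i, k (s i)) ⟶ (t i, k')) =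
        (((Φ i, 𝟙 (k (s i))) : (s i, k (s i)) ⟶ (t i, k (s i))) ≫
          (𝟙 (t i), g (s i)) : (s i, k (s i)) ⟶ (t i, k')) := by
      simp only [Category.id_comp, Category.comp_id, prod_comp]
    erw [Colimit.w_apply, tt, FunctorToTypes.map_comp_apply, Colimit.w_apply, e,
      ← Limit.w_apply (Φ i), ← e]
    erw [Types.Colimit.ι_map_apply]
    rfl
  simp_rw [FilteredColimit.colimit_eq_iff] at w
  let kf : I → K := fun i => (w i).choose
  let gf : ∀ i : I, k' ⟶ kf i := fun i => (w i).choose_spec.choose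
  let hf : ∀ i : I, k' ⟶ kf i := fun i => (w i).choose_spec.choose_spec.choose
  have wf : ∀ i : I,
      F.map ((𝟙 (t i), g (t i) ≫ gf i) : (t i, k (t i)) ⟶ (t i, kf i)) (y (t i)) =
        F.map ((Φ i, g (s i) ≫ hf i) : (s i, k (s i)) ⟶ (t i, kf i)) (y (s i)) := by
    intro i
    have q :
        ((Functor.curry.obj F).obj (t i)).map (gf i)
            (F.map ((𝟙 (t i), g (t i)) : (t i, k (t i)) ⟶ (t i, k')) (y (t i))) =
          ((Functor.curry.obj F).obj (t i)).map (hf i)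
            (F.map ((Φ i, g (s i)) : (s i, k (s i)) ⟶ (t i, k')) (y (s i))) :=
      (w i).choose_spec.choose_spec.choose_spec
    rw [Functor.curry_obj_obj_map, Functor.curry_obj_obj_map] at q
    simp_rw [← FunctorToTypes.map_comp_apply, CategoryStruct.comp] at q
    convert q <;> first | rfl | simp only [Category.comp_id]
  clear_value kf gf hf
  clear w
  let O : Finset K := Finset.univ.image kf ∪ {k'}
  have kfO : ∀ i : I, kf i ∈ O := fun i =>
    Finset.mem_union.mpr (Or.inl (Finset.mem_image.mpr ⟨i, Finset.mem_univ _, rfl⟩))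
  have k'O : k' ∈ O := Finset.mem_union.mpr (Or.inr (Finset.mem_singleton.mpr rfl))
  let H : Finset (Σ' (X Y : K) (_ : X ∈ O) (_ : Y ∈ O), X ⟶ Y) :=
    Finset.univ.biUnion fun i : I =>
      {⟨k', kf i, k'O, kfO i, gf i⟩, ⟨k', kf i, k'O, kfO i, hf i⟩}
  obtain ⟨k'', T, W⟩ := IsFiltered.sup_exists O H
  let e₀ : k' ⟶ k'' := T k'O
  have hgf : ∀ i : I, gf i ≫ T (kfO i) = e₀ := by
    intro i
    apply W k'O (kfO i)
    refine Finset.mem_biUnion.mpr ⟨i, Finset.mem_univ _, ?_⟩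
    simp
  have hhf : ∀ i : I, hf i ≫ T (kfO i) = e₀ := by
    intro i
    apply W k'O (kfO i)
    refine Finset.mem_biUnion.mpr ⟨i, Finset.mem_univ _, ?_⟩
    simp
  clear_value e₀
  -- the key coherence statement, proved by the generation hypothesis
  have coh : ∀ ⦃a b : J⦄ (f : a ⟶ b),
      F.map ((f, g a ≫ e₀) : (a, k a) ⟶ (b, k'')) (y a) =
        F.map ((𝟙 b, g b ≫ e₀) : (b, k b) ⟶ (b, k'')) (y b) := by
    apply hgen
    · intro a; rfl
    · intro i
      have := congr_arg (F.map ((𝟙 (t i), T (kfO i)) : (t i, kf i) ⟶ (t i, k''))) (wf i)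
      rw [← FunctorToTypes.map_comp_apply, ← FunctorToTypes.map_comp_apply] at this
      simp only [prod_comp, Category.id_comp, Category.comp_id, Category.assoc,
        hgf, hhf] at this
      exact this.symm
    · intro a b c f f' hf₁ hf₂
      have t1 : ((f ≫ f', g a ≫ e₀) : (a, k a) ⟶ (c, k'')) =
          (((f, g a ≫ e₀) : (a, k a) ⟶ (b, k'')) ≫ (f', 𝟙 k'') : (a, k a) ⟶ (c, k'')) := by
        simp [prod_comp]
      have t2 : ((f', g b ≫ e₀) : (b, k b) ⟶ (c, k'')) =
          (((𝟙 b, g b ≫ e₀) : (b, k b) ⟶ (b, k'')) ≫ (f', 𝟙 k'') : (b, k b) ⟶ (c, k'')) := by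
        simp [prod_comp]
      calc F.map ((f ≫ f', g a ≫ e₀) : (a, k a) ⟶ (c, k'')) (y a)
          = F.map ((f', 𝟙 k'') : (b, k'') ⟶ (c, k''))
              (F.map ((f, g a ≫ e₀) : (a, k a) ⟶ (b, k'')) (y a)) := by
            rw [t1, FunctorToTypes.map_comp_apply]
        _ = F.map ((f', 𝟙 k'') : (b, k'') ⟶ (c, k''))
              (F.map ((𝟙 b, g b ≫ e₀) : (b, k b) ⟶ (b, k'')) (y b)) := by rw [hf₁]
        _ = F.map ((f', g b ≫ e₀) : (b, k b) ⟶ (c, k'')) (y b) := by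
            rw [t2, FunctorToTypes.map_comp_apply]
        _ = F.map ((𝟙 c, g c ≫ e₀) : (c, k c) ⟶ (c, k'')) (y c) := hf₂
  fconstructor
  · apply colimit.ι (Functor.curry.obj (swap K J ⋙ F) ⋙ Limits.lim) k'' _
    dsimp
    apply Limit.mk
    swap
    · exact fun j => F.map ((𝟙 j, g j ≫ e₀) : (j, k j) ⟶ (j, k'')) (y j)
    · dsimp
      intro j j' f
      rw [← FunctorToTypes.map_comp_apply]
      have : (((𝟙 j, g j ≫ e₀) : (j, k j) ⟶ (j, k'')) ≫ (f, 𝟙 k'') : (j, k j) ⟶ (j', k'')) =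
          (f, g j ≫ e₀) := by
        simp [prod_comp]
      rw [this, coh f]
  · apply limit_ext
    intro j
    simp only [id, ← e, Limits.ι_colimitLimitToLimitColimit_π_apply,
      FilteredColimit.colimit_eq_iff, CategoryTheory.Bifunctor.map_id_comp, types_comp_apply, Functor.curry_obj_obj_map,
      Functor.comp_obj, colim_obj, Limit.π_mk]
    refine ⟨k'', 𝟙 k'', g j ≫ e₀, ?_⟩
    rw [CategoryTheory.Bifunctor.map_id]
    rfl

theorem stmt_6 {F D : Type u} [SmallCategory F] [SmallCategory D]
    [IsFiltered F] (hD : FinitelyGeneratedCategory D) (D' : F × D ⥤ Type u) :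
    Function.Bijective
      (colimitLimitToLimitColimit (CategoryTheory.Prod.swap D F ⋙ D')) := by
  obtain ⟨hfin, I, hI, s, t, Φ, hgen⟩ := hD
  exact ⟨colimitLimitToLimitColimit_injective _,
    aux_surjective Φ hgen _⟩
end

section
/- Let G be a finitely generated group, J a small filtered category, and X : J ⥤ Action Type G a filtered diagram of G-sets. Then the canonical map colim_{j : J} (X j)^G ⟶ (colim_J X)^G is a bijection, where for a G-set Y the fixed-point set is Y^G = { y : Y | ∀ g : G, g • y = y }. That is, the fixed points of the colimit are the colimit of the fixed points. -/
open CategoryTheory CategoryTheory.Limits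

/-- The fixed-points functor on `G`-sets, sending a `G`-set `Y` to
`{ y : Y | ∀ g : G, g • y = y }`. -/
def fixedPointsFunctor (G : Type u) [Group G] :
    Action (Type u) (MonCat.of G) ⥤ Type u where
  obj Y := { y : Y.V // ∀ g : G, Y.ρ g y = y }
  map {Y Z} f := TypeCat.ofHom fun y => ⟨f.hom y.1, fun g => by
    have h := ConcreteCategory.congr_hom (f.comm g) y.1
    simp only [types_comp_apply] at h
    rw [← h, y.2 g]⟩
  map_id Y := by
    ext y
    rfl
  map_comp f g := by
    ext y
    rfl

theorem stmt_7 (G : Type u) [Group G] (hG : Group.FG G)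
    (J : Type u) [SmallCategory J] [IsFiltered J]
    (X : J ⥤ Action (Type u) (MonCat.of G)) :
    Function.Bijective (colimit.post X (fixedPointsFunctor G)) := by
  classical
  obtain ⟨S, hS⟩ := hG.out
  set F := fixedPointsFunctor G with hF
  set U := Action.forget (Type u) (MonCat.of G) with hU
  have hpostU : Function.Bijective (colimit.post X U) :=
    (isIso_iff_bijective _).mp inferInstance
  -- representation of elements of the underlying colimit
  have rep : ∀ v : (colimit X).V, ∃ (j : J) (x : (X.obj j).V),
      (colimit.ι X j).hom x = v := by
    intro v
    obtain ⟨w, hw⟩ := hpostU.2 v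
    obtain ⟨j, x, hx⟩ := Types.jointly_surjective' w
    refine ⟨j, x, ?_⟩
    have := ConcreteCategory.congr_hom (colimit.ι_post X U j) x
    simp only [types_comp_apply] at this
    rw [show (colimit.ι X j).hom x = (colimit.post X U) (colimit.ι (X ⋙ U) j x) from this.symm,
      hx, hw]
  -- equality detection in the underlying colimit
  have eqd : ∀ {j j' : J} (x : (X.obj j).V) (x' : (X.obj j').V),
      (colimit.ι X j).hom x = (colimit.ι X j').hom x' →
      ∃ (k : J) (f : j ⟶ k) (g : j' ⟶ k), (X.map f).hom x = (X.map g).hom x' := by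
    intro j j' x x' h
    have h1 := ConcreteCategory.congr_hom (colimit.ι_post X U j) x
    have h2 := ConcreteCategory.congr_hom (colimit.ι_post X U j') x'
    simp only [types_comp_apply, ConcreteCategory.comp_apply] at h1 h2
    have : (colimit.post X U) (colimit.ι (X ⋙ U) j x) =
        (colimit.post X U) (colimit.ι (X ⋙ U) j' x') := by
      exact h1.trans (h.trans h2.symm)
    have := hpostU.1 this
    exact (Types.FilteredColimit.colimit_eq_iff (X ⋙ U)).mp this
  -- naturality of ι w.r.t. a morphism, elementwise
  have wapp : ∀ {j k : J} (u : j ⟶ k) (x : (X.obj j).V),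
      (colimit.ι X k).hom ((X.map u).hom x) = (colimit.ι X j).hom x := by
    intro j k u x
    have := congr_arg Action.Hom.hom (colimit.w X u)
    exact ConcreteCategory.congr_hom this x
  -- equivariance of ι, elementwise
  have comm : ∀ {j : J} (g : G) (x : (X.obj j).V),
      (colimit.ι X j).hom ((X.obj j).ρ g x) = (colimit X).ρ g ((colimit.ι X j).hom x) := by
    intro j g x
    exact ConcreteCategory.congr_hom ((colimit.ι X j).comm g) x
  have commmap : ∀ {j k : J} (u : j ⟶ k) (g : G) (x : (X.obj j).V),
      (X.map u).hom ((X.obj j).ρ g x) = (X.obj k).ρ g ((X.map u).hom x) := by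
    intro j k u g x
    exact ConcreteCategory.congr_hom ((X.map u).comm g) x
  constructor
  · -- injectivity
    intro a b hab
    obtain ⟨j, p, rfl⟩ := Types.jointly_surjective' a
    obtain ⟨j', q, rfl⟩ := Types.jointly_surjective' b
    have ha := ConcreteCategory.congr_hom (colimit.ι_post X F j) p
    have hb := ConcreteCategory.congr_hom (colimit.ι_post X F j') q
    simp only [types_comp_apply] at ha hb
    rw [ha, hb] at hab
    have hval : (colimit.ι X j).hom p.1 = (colimit.ι X j').hom q.1 :=
      congr_arg Subtype.val hab
    obtain ⟨k, f, g, hfg⟩ := eqd p.1 q.1 hval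
    have : (X ⋙ F).map f p = (X ⋙ F).map g q := Subtype.ext hfg
    calc colimit.ι (X ⋙ F) j p
        = colimit.ι (X ⋙ F) k ((X ⋙ F).map f p) := (colimit.w_apply (X ⋙ F) f p).symm
      _ = colimit.ι (X ⋙ F) k ((X ⋙ F).map g q) := by rw [this]
      _ = colimit.ι (X ⋙ F) j' q := colimit.w_apply (X ⋙ F) g q
  · -- surjectivity
    intro y
    change { v : (colimit X).V // ∀ g : G, (colimit X).ρ g v = v } at y
    obtain ⟨j, x, hx⟩ := rep y.1
    -- the class of x is fixed by every g
    have hfixcol : ∀ g : G, (colimit X).ρ g ((colimit.ι X j).hom x) = (colimit.ι X j).hom x := by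
      intro g; rw [hx]; exact y.2 g
    -- push x forward so that it becomes fixed by every element of S
    have key : ∀ (T : Finset G), ∃ (k : J) (u : j ⟶ k),
        ∀ s ∈ T, (X.obj k).ρ s ((X.map u).hom x) = (X.map u).hom x := by
      intro T
      induction T using Finset.induction_on with
      | empty => exact ⟨j, 𝟙 j, by simp⟩
      | insert a T hnotmem ih =>
        obtain ⟨k, u, hu⟩ := ih
        set x₁ := (X.map u).hom x with hx₁def
        have hx₁ : (colimit.ι X k).hom x₁ = (colimit.ι X j).hom x := wapp u x
        have heq : (colimit.ι X k).hom ((X.obj k).ρ a x₁) = (colimit.ι X k).hom x₁ := by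
          rw [comm a x₁, hx₁, hfixcol a, ← hx₁]
        obtain ⟨m, f, g, hfg⟩ := eqd _ _ heq
        set v : k ⟶ IsFiltered.coeq f g := f ≫ IsFiltered.coeqHom f g with hv
        have hveq : (X.map v).hom ((X.obj k).ρ a x₁) = (X.map v).hom x₁ := by
          have hcomp : ∀ (z : (X.obj k).V),
              (X.map v).hom z = (X.map (IsFiltered.coeqHom f g)).hom ((X.map f).hom z) := by
            intro z
            rw [hv, X.map_comp]
            rfl
          rw [hcomp, hcomp, hfg]
          have : (X.map (g ≫ IsFiltered.coeqHom f g)).hom x₁ =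
              (X.map (f ≫ IsFiltered.coeqHom f g)).hom x₁ := by
            rw [IsFiltered.coeq_condition f g]
          rw [X.map_comp] at this
          have := congr_arg (fun h => h) this
          simpa [X.map_comp] using this
        refine ⟨IsFiltered.coeq f g, u ≫ v, ?_⟩
        intro s hs
        have hxs : (X.map (u ≫ v)).hom x = (X.map v).hom x₁ := by
          rw [X.map_comp]; rfl
        rw [hxs]
        rcases Finset.mem_insert.mp hs with rfl | hsT
        · rw [← commmap v s x₁, hveq]
        · rw [← commmap v s x₁, hu s hsT]
    obtain ⟨k, u, hu⟩ := key S
    set x' := (X.map u).hom x with hx'def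
    -- x' is fixed by all of G
    have hstab : ∀ g : G, (X.obj k).ρ g x' = x' := by
      have hsub : ∀ g ∈ Subgroup.closure (S : Set G), (X.obj k).ρ g x' = x' := by
        intro g hg
        induction hg using Subgroup.closure_induction with
        | mem s hs => exact hu s hs
        | one =>
          show ((X.obj k).ρ 1) x' = x'
          rw [map_one]
          rfl
        | mul a b _ _ ha hb =>
          show ((X.obj k).ρ (a * b)) x' = x'
          rw [map_mul]
          show ((X.obj k).ρ a) (((X.obj k).ρ b) x') = x'
          rw [hb, ha]
        | inv a _ ha =>
          have : ((X.obj k).ρ a⁻¹) (((X.obj k).ρ a) x') = x' := by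
            have : ((X.obj k).ρ a⁻¹) (((X.obj k).ρ a) x') = ((X.obj k).ρ (a⁻¹ * a)) x' := by
              rw [map_mul]; rfl
            rw [this, inv_mul_cancel, map_one]
            rfl
          rw [ha] at this
          exact this
      intro g
      exact hsub g (by rw [hS]; trivial)
    refine ⟨colimit.ι (X ⋙ F) k (⟨x', hstab⟩ : { v : (X.obj k).V // ∀ g : G, (X.obj k).ρ g v = v }), ?_⟩
    have hp := ConcreteCategory.congr_hom (colimit.ι_post X F k) (⟨x', hstab⟩ : { v : (X.obj k).V // ∀ g : G, (X.obj k).ρ g v = v })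
    simp only [types_comp_apply, ConcreteCategory.comp_apply] at hp
    refine hp.trans ?_
    apply Subtype.ext
    show (colimit.ι X k).hom x' = y.1
    rw [hx'def, wapp u x, hx]
end

section
/- Let 𝒜 be an abelian category with all small coproducts (AB3) in which filtered colimits are exact (AB5): for every small filtered category J, the colimit functor colim : (J ⥤ 𝒜) ⥤ 𝒜 preserves finite limits. Then for every type X, the coproduct functor colim : (Discrete X ⥤ 𝒜) ⥤ 𝒜 preserves finite limits. In particular 𝒜 satisfies AB4: for any two families A, B : X → 𝒜 and any family of monomorphisms η_x : A x ⟶ B x, the induced map ⨁_{x : X} A x ⟶ ⨁_{x : X} B x is a monomorphism. -/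
/-!
A coproduct over `X` is the filtered colimit, over the finite subsets of `X`, of the finite
sub-coproducts; these are biproducts, hence finite limits, so AB5 gives AB4. A family of
monomorphisms is a monomorphism of `Discrete X`-diagrams, which the left exact functor `colim`
preserves.
-/

open CategoryTheory CategoryTheory.Limits

theorem mono_sigmaMap_of_preservesFiniteLimits_colim {C : Type*} [Category C] {X : Type*}
    [HasCoproductsOfShape X C] [PreservesFiniteLimits (colim : (Discrete X ⥤ C) ⥤ C)]
    {A B : X → C} (η : ∀ x, A x ⟶ B x) [∀ x, Mono (η x)] : Mono (Limits.Sigma.map η) := by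
  let η' : Discrete.functor A ⟶ Discrete.functor B := Discrete.natTrans fun x => η x.as
  have (j : Discrete X) : Mono (η'.app j) := inferInstanceAs (Mono (η j.as))
  have : Mono η' := NatTrans.mono_of_mono_app η'
  exact (colim : (Discrete X ⥤ C) ⥤ C).map_mono η'

theorem stmt_9 (𝒜 : Type u) [Category.{v} 𝒜] [Abelian 𝒜]
    [HasCoproducts.{w} 𝒜]
    (AB5 : ∀ (J : Type w) [SmallCategory J] [IsFiltered J]
      [HasColimitsOfShape J 𝒜],
      PreservesFiniteLimits (colim : (J ⥤ 𝒜) ⥤ 𝒜)) :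
    (∀ X : Type w,
      PreservesFiniteLimits (colim : (Discrete X ⥤ 𝒜) ⥤ 𝒜)) ∧
    (∀ (X : Type w) (A B : X → 𝒜) (η : ∀ x : X, A x ⟶ B x),
      (∀ x : X, Mono (η x)) → Mono (Limits.Sigma.map η)) := by
  have : HasColimitsOfSize.{w, w} 𝒜 := has_colimits_of_hasCoequalizers_and_coproducts
  have : HasFiniteBiproducts 𝒜 := HasFiniteBiproducts.of_hasFiniteProducts
  have : AB5OfSize.{w, w} 𝒜 := ⟨fun J _ _ => ⟨AB5 J⟩⟩
  have : AB4OfSize.{w} 𝒜 := AB4.of_AB5 𝒜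
  have AB4 (X : Type w) : PreservesFiniteLimits (colim : (Discrete X ⥤ 𝒜) ⥤ 𝒜) :=
    HasExactColimitsOfShape.preservesFiniteLimits
  exact ⟨AB4, fun X A B η _ => have := AB4 X; mono_sigmaMap_of_preservesFiniteLimits_colim η⟩
end
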